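/- Let f : A → A be a continuous map of degree d with |d| > 1. Then f has at most |d − 1| Nielsen classes of fixed points: every set of fixed points of f that are pairwise not Nielsen equivalent has at most |d − 1| elements. -/

import Mathlib

open Set Filter Topology

noncomputable section

/-- The open annulus `A = S¹ × (0,1)`. -/
abbrev Ann : Type := Circle × (Set.Ioo (0:ℝ) 1)

/-- The universal cover `Ã = ℝ × (0,1)`. -/
abbrev AnnTil : Type := ℝ × (Set.Ioo (0:ℝ) 1)

/-- The covering projection `π(x,y) = (exp(2πix), y)`. -/
def pr : AnnTil → Ann := fun z => (Circle.exp (2 * Real.pi * z.1), z.2)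

/-- Translation by an integer in the first coordinate: `z + k`. -/
def tr (z : AnnTil) (k : ℤ) : AnnTil := (z.1 + k, z.2)

/-- `F` is a lift of `f`. -/
def IsLift (f : Ann → Ann) (F : AnnTil → AnnTil) : Prop :=
  Continuous F ∧ pr ∘ F = f ∘ pr

/-- `f` has degree `d`: some lift satisfies `F(z+1) = F(z) + d`. -/
def HasDegree (f : Ann → Ann) (d : ℤ) : Prop :=
  ∃ F : AnnTil → AnnTil, IsLift f F ∧ ∀ z, F (tr z 1) = tr (F z) d

/-- A subset of the annulus is essential if it is not contained in any
connected, simply connected open subset. -/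
def IsEssential (K : Set Ann) : Prop :=
  ¬ ∃ U : Set Ann, IsOpen U ∧ IsConnected U ∧ SimplyConnectedSpace U ∧ K ⊆ U

/-- Nielsen equivalence of fixed points `p`, `q` of `g`: there is a path `γ`
from `p` to `q` homotopic (rel endpoints) to `g ∘ γ`. -/
def NielsenEquiv (g : Ann → Ann) (p q : Ann) : Prop :=
  ∃ (hg : Continuous g) (hp : g p = p) (hq : g q = q) (γ : Path p q),
    γ.Homotopic ((γ.map hg).cast hp.symm hq.symm)

/-- `g` has exactly `N` Nielsen classes of fixed points. -/
def HasExactlyNielsenClasses (g : Ann → Ann) (N : ℕ) : Prop :=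
  ∃ S : Finset Ann, S.card = N ∧ (∀ p ∈ S, g p = p) ∧
    (∀ p ∈ S, ∀ q ∈ S, p ≠ q → ¬ NielsenEquiv g p q) ∧
    (∀ p, g p = p → ∃ q ∈ S, NielsenEquiv g p q)

/-- `Fill K`: the union of `K` with the connected components of its
complement whose closure is compact. -/
def Fill (K : Set Ann) : Set Ann :=
  K ∪ {x | x ∈ Kᶜ ∧ IsCompact (closure (connectedComponentIn Kᶜ x))}

/-!
Fix a lift `F` of degree `d`. A fixed point of `f` is `π z` with `F z = z + k`, and replacing `z`
by `z + m` replaces `k` by `k + m (d - 1)`, so `k mod (d - 1)` only depends on the fixed point.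
If two fixed points `π z`, `π w` have the same residue, the lifts can be chosen with
`F z = z + k` and `F w = w + k`. As `Ã` is simply connected, for a path `Γ` from `z` to `w` the
paths `F ∘ Γ` and `Γ + k` are homotopic, and projecting by `π` shows that `π ∘ Γ` is a Nielsen
equivalence. So pairwise inequivalent fixed points have distinct residues modulo `d - 1`.
-/

lemma tr_tr (z : AnnTil) (a b : ℤ) : tr (tr z a) b = tr z (a + b) := by
  simp only [tr, Int.cast_add, add_assoc]

lemma tr_zero (z : AnnTil) : tr z 0 = z := by simp [tr]

lemma tr_tr_neg (z : AnnTil) (k : ℤ) : tr (tr z k) (-k) = z := by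
  rw [tr_tr, add_neg_cancel, tr_zero]

lemma continuous_tr (k : ℤ) : Continuous (fun z => tr z k) := by
  unfold tr
  fun_prop

lemma continuous_pr : Continuous pr := by
  unfold pr
  fun_prop

lemma pr_tr (z : AnnTil) (k : ℤ) : pr (tr z k) = pr z := by
  simp only [pr, tr, Prod.mk.injEq, and_true]
  exact Circle.exp_eq_exp.2 ⟨k, by ring⟩

lemma pr_surjective : Function.Surjective pr := by
  intro p
  refine ⟨(Complex.arg p.1 / (2 * Real.pi), p.2), Prod.ext ?_ rfl⟩
  simp only [pr, mul_div_cancel₀ _ Real.two_pi_pos.ne']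
  exact Circle.leftInverse_exp_arg p.1

lemma exists_eq_tr_of_pr_eq {z w : AnnTil} (h : pr z = pr w) : ∃ m : ℤ, w = tr z m := by
  obtain ⟨m, hm⟩ := Circle.exp_eq_exp.1 (congrArg Prod.fst h)
  refine ⟨-m, Prod.ext ?_ (congrArg Prod.snd h).symm⟩
  have : z.1 = w.1 + m := by
    apply mul_left_cancel₀ Real.two_pi_pos.ne'
    linarith
  simp only [tr, Int.cast_neg]
  linarith

instance : ContractibleSpace AnnTil :=
  haveI : ContractibleSpace (Set.Ioo (0:ℝ) 1) :=
    (convex_Ioo 0 1).contractibleSpace (Set.nonempty_Ioo.2 zero_lt_one)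
  inferInstance

section Lift

variable {f : Ann → Ann} {F : AnnTil → AnnTil} {d : ℤ}

lemma map_tr_of_map_tr_one (hF : ∀ z, F (tr z 1) = tr (F z) d) (z : AnnTil) (m : ℤ) :
    F (tr z m) = tr (F z) (m * d) := by
  have hstep : ∀ m : ℤ, F (tr z (m + 1)) = tr (F (tr z m)) d := fun m => by
    rw [← hF, tr_tr]
  induction m using Int.induction_on with
  | zero => simp [tr_zero]
  | succ n ih => rw [hstep, ih, tr_tr, add_one_mul]
  | pred n ih =>
    have h := hstep (-n - 1)
    rw [sub_add_cancel, ih] at h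
    rw [← tr_tr_neg (F (tr z (-n - 1))) d, ← h, tr_tr]
    ring_nf

lemma map_tr_of_map_eq_tr (hF : ∀ z, F (tr z 1) = tr (F z) d) {z : AnnTil} {k : ℤ}
    (hz : F z = tr z k) (m : ℤ) : F (tr z m) = tr (tr z m) (k + m * (d - 1)) := by
  rw [map_tr_of_map_tr_one hF, hz, tr_tr, tr_tr]
  ring_nf

lemma exists_map_eq_tr_of_isFixedPt (hl : IsLift f F) {z : AnnTil} (hz : f (pr z) = pr z) :
    ∃ k : ℤ, F z = tr z k :=
  exists_eq_tr_of_pr_eq (by rw [← hz]; exact (congrFun hl.2 z).symm)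

lemma nielsenEquiv_pr_of_map_eq_tr (hf : Continuous f) (hl : IsLift f F) {z w : AnnTil} {k : ℤ}
    (hz : F z = tr z k) (hw : F w = tr w k) : NielsenEquiv f (pr z) (pr w) := by
  have hcomm : ∀ x, pr (F x) = f (pr x) := fun x => congrFun hl.2 x
  have hfz : f (pr z) = pr z := by rw [← hcomm, hz, pr_tr]
  have hfw : f (pr w) = pr w := by rw [← hcomm, hw, pr_tr]
  let Γ : Path z w := PathConnectedSpace.somePath z w
  have hΓ : (Γ.map hl.1).Homotopic ((Γ.map (continuous_tr k)).cast hz hw) :=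
    SimplyConnectedSpace.paths_homotopic _ _
  have hz' : pr z = pr (F z) := by rw [hcomm, hfz]
  have hw' : pr w = pr (F w) := by rw [hcomm, hfw]
  have hproj := (hΓ.map ⟨pr, continuous_pr⟩).pathCast hz' hw'
  have htr : (((Γ.map (continuous_tr k)).cast hz hw).map continuous_pr).cast hz' hw' =
      Γ.map continuous_pr :=
    Path.ext <| funext fun t => pr_tr (Γ t) k
  have hlift : ((Γ.map hl.1).map continuous_pr).cast hz' hw' =
      ((Γ.map continuous_pr).map hf).cast hfz.symm hfw.symm :=
    Path.ext <| funext fun t => hcomm (Γ t)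
  refine ⟨hf, hfz, hfw, Γ.map continuous_pr, ?_⟩
  rw [← hlift, ← htr]
  exact hproj.symm

lemma nielsenEquiv_pr_of_dvd (hf : Continuous f) (hl : IsLift f F)
    (hF : ∀ z, F (tr z 1) = tr (F z) d) {z w : AnnTil} {k l : ℤ}
    (hz : F z = tr z k) (hw : F w = tr w l) (hkl : d - 1 ∣ k - l) :
    NielsenEquiv f (pr z) (pr w) := by
  obtain ⟨m, hm⟩ := hkl
  have hw' : F (tr w m) = tr (tr w m) k := by
    rw [map_tr_of_map_eq_tr hF hw]
    congr 1
    linarith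
  simpa only [pr_tr] using nielsenEquiv_pr_of_map_eq_tr hf hl hz hw'

end Lift

/-- A degree-`d` (`|d|>1`) map of the annulus has at most `|d-1|` Nielsen
classes of fixed points. -/
theorem stmt_6 (f : Ann → Ann) (hf : Continuous f) (d : ℤ)
    (hdeg : HasDegree f d) (hd : 1 < |d|) :
    ∀ S : Finset Ann, (∀ p ∈ S, f p = p) →
      (∀ p ∈ S, ∀ q ∈ S, p ≠ q → ¬ NielsenEquiv f p q) →
      S.card ≤ (d - 1).natAbs := by
  intro S hfix hS
  obtain ⟨F, hl, hF⟩ := hdeg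
  have : NeZero (d - 1).natAbs := by
    refine ⟨Int.natAbs_ne_zero.2 (sub_ne_zero.2 ?_)⟩
    rintro rfl
    simp at hd
  choose z hz using pr_surjective
  have hk : ∀ p : S, ∃ k : ℤ, F (z p) = tr (z p) k := fun p =>
    exists_map_eq_tr_of_isFixedPt hl (by rw [hz]; exact hfix p p.2)
  choose k hk using hk
  have hinj : Function.Injective (fun p : S => (k p : ZMod (d - 1).natAbs)) := by
    intro p q hpq
    by_contra hne
    refine hS p p.2 q q.2 (Subtype.coe_ne_coe.2 hne) ?_
    have hdvd : d - 1 ∣ k p - k q :=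
      Int.natAbs_dvd.1 ((ZMod.intCast_eq_intCast_iff_dvd_sub _ _ _).1 hpq.symm)
    simpa only [hz] using nielsenEquiv_pr_of_dvd hf hl hF (hk p) (hk q) hdvd
  simpa using Fintype.card_le_of_injective _ hinj
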